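/- arXiv:2202.00902 — 7 statements merged into one kernel-verified Lean document; each statement's English description precedes it below -/
import Mathlib

section
/- For each k ≥ 3, the k-hypergraph H = {{v_1,v_2,...,v_k}, {v_2,v_3,...,v_{k+1}}} on the (k+1)-element set V = {v_1,...,v_{k+1}} is not orderable. Consequently, for each k ≥ 3 there exist separable but not orderable k-hypergraphs. -/
variable {V : Type*} [DecidableEq V]

/-- Position `i` of the ordering `l` is *dominating* for the `k`-hypergraph `H`:
every `k`-set `E` with `l.get i ∈ E` contained in the first `i+1` vertices of `l`
is an edge of `H`. -/
def DomAt (k : ℕ) (H : Finset (Finset V)) (l : List V) (i : Fin l.length) : Prop :=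
  ∀ E : Finset V, E.card = k → l.get i ∈ E →
    (∀ x ∈ E, x ∈ l.take ((i : ℕ) + 1)) → E ∈ H

/-- Position `i` of the ordering `l` is *isolating* for the `k`-hypergraph `H`:
every `k`-set `E` with `l.get i ∈ E` contained in the first `i+1` vertices of `l`
is a non-edge of `H`. -/
def IsoAt (k : ℕ) (H : Finset (Finset V)) (l : List V) (i : Fin l.length) : Prop :=
  ∀ E : Finset V, E.card = k → l.get i ∈ E →
    (∀ x ∈ E, x ∈ l.take ((i : ℕ) + 1)) → E ∉ H

/-- `l` is an elimination order for `H`: each position is dominating or isolating. -/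
def IsElimOrder (k : ℕ) (H : Finset (Finset V)) (l : List V) : Prop :=
  ∀ i : Fin l.length, DomAt k H l i ∨ IsoAt k H l i

/-- `H` is orderable on vertex set `W`: some enumeration of `W` is an elimination order. -/
def Orderable (k : ℕ) (H : Finset (Finset V)) (W : Finset V) : Prop :=
  ∃ l : List V, l.Nodup ∧ l.toFinset = W ∧ IsElimOrder k H l

/-- `H` is separable on vertex set `W`: for some labeling `a : V → ℤ`,
`H = {E ⊆ W : |E| = k, a(E) ≥ 0}`. -/
def Separable (k : ℕ) (H : Finset (Finset V)) (W : Finset V) : Prop :=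
  ∃ a : V → ℤ, ∀ E : Finset V, E ∈ H ↔ (E ⊆ W ∧ E.card = k ∧ 0 ≤ ∑ v ∈ E, a v)

/-- `M` is a perfect matching of the vertex set `W`: its edges are pairwise
disjoint and their union is `W`. -/
def IsPerfectMatching (M : Finset (Finset V)) (W : Finset V) : Prop :=
  (M : Set (Finset V)).PairwiseDisjoint id ∧ M.biUnion id = W


/-- For `k ≥ 3`, the `k`-hypergraph
`{{v_1, …, v_k}, {v_2, …, v_{k+1}}}` on a `(k+1)`-element vertex set is not
orderable, yet it is separable; consequently, for each `k ≥ 3` there exist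
separable but not orderable `k`-hypergraphs. -/
theorem two_edge_hypergraph_not_orderable (k : ℕ) (hk : 3 ≤ k) :
    ¬ Orderable k
        ({Finset.univ.erase (Fin.last k), Finset.univ.erase 0} :
          Finset (Finset (Fin (k + 1)))) Finset.univ ∧
    Separable k
        ({Finset.univ.erase (Fin.last k), Finset.univ.erase 0} :
          Finset (Finset (Fin (k + 1)))) Finset.univ := by
  have hlast0 : (Fin.last k) ≠ (0 : Fin (k+1)) := by
    simp [Fin.ext_iff, Fin.last]; omega
  have hcardV : (Finset.univ : Finset (Fin (k+1))).card = k + 1 := by simp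
  have hcardE : ∀ w : Fin (k+1), (Finset.univ.erase w).card = k := by
    intro w
    rw [Finset.card_erase_of_mem (Finset.mem_univ w), hcardV]
    omega
  have herase_inj : ∀ w w' : Fin (k+1),
      Finset.univ.erase w = Finset.univ.erase w' → w = w' := by
    intro w w' h
    by_contra hne
    have : w ∈ Finset.univ.erase w' := Finset.mem_erase.2 ⟨hne, Finset.mem_univ w⟩
    rw [← h] at this
    exact Finset.notMem_erase w Finset.univ this
  constructor
  · rintro ⟨l, hnd, htf, helim⟩
    have hlen : l.length = k + 1 := by
      have h1 : l.toFinset.card = l.length := List.toFinset_card_of_nodup hnd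
      rw [htf, hcardV] at h1
      omega
    have hi : k < l.length := by omega
    set i : Fin l.length := ⟨k, hi⟩ with hidef
    set v := l.get i with hv
    have hmem : ∀ x : Fin (k+1), x ∈ l.take ((i : ℕ) + 1) := by
      intro x
      have hle : l.length ≤ (i : ℕ) + 1 := by simp [hidef]; omega
      rw [List.take_of_length_le hle, ← List.mem_toFinset, htf]
      exact Finset.mem_univ x
    rcases helim i with hdom | hiso
    · -- dominating: find w outside {0, last, v}, erase w is a non-edge containing v
      have h3 : ({0, Fin.last k, v} : Finset (Fin (k+1))).card < (Finset.univ : Finset (Fin (k+1))).card := by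
        have c1 := Finset.card_insert_le (0 : Fin (k+1)) {Fin.last k, v}
        have c2 := Finset.card_insert_le (Fin.last k) ({v} : Finset (Fin (k+1)))
        simp only [Finset.card_singleton] at c1 c2
        rw [hcardV]
        omega
      obtain ⟨w, -, hw⟩ := Finset.exists_of_ssubset
        (Finset.ssubset_univ_iff.2
          (fun h : ({0, Fin.last k, v} : Finset (Fin (k+1))) = Finset.univ => by
            rw [h] at h3; omega))
      simp only [Finset.mem_insert, Finset.mem_singleton, not_or] at hw
      obtain ⟨hw0, hwl, hwv⟩ := hw
      have hE : Finset.univ.erase w ∈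
          ({Finset.univ.erase (Fin.last k), Finset.univ.erase 0} :
            Finset (Finset (Fin (k + 1)))) := by
        apply hdom _ (hcardE w)
        · exact Finset.mem_erase.2 ⟨fun h => hwv h.symm, Finset.mem_univ _⟩
        · exact fun x _ => hmem x
      rcases Finset.mem_insert.1 hE with h | h
      · exact hwl (herase_inj _ _ h)
      · exact hw0 (herase_inj _ _ (Finset.mem_singleton.1 h))
    · -- isolating: one of the two edges contains v
      by_cases hvl : v = Fin.last k
      · apply hiso (Finset.univ.erase 0) (hcardE 0)
        · exact Finset.mem_erase.2 ⟨by rw [← hv, hvl]; exact hlast0, Finset.mem_univ _⟩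
        · exact fun x _ => hmem x
        · exact Finset.mem_insert.2 (Or.inr (Finset.mem_singleton.2 rfl))
      · apply hiso (Finset.univ.erase (Fin.last k)) (hcardE _)
        · exact Finset.mem_erase.2 ⟨by rw [← hv]; exact hvl, Finset.mem_univ _⟩
        · exact fun x _ => hmem x
        · exact Finset.mem_insert.2 (Or.inl rfl)
  · -- Separable
    refine ⟨fun v => 2 + (if v = 0 then -(2*(k:ℤ)) else 0)
      + (if v = Fin.last k then -(2*(k:ℤ)) else 0), ?_⟩
    set a : Fin (k+1) → ℤ := fun v => 2 + (if v = 0 then -(2*(k:ℤ)) else 0)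
      + (if v = Fin.last k then -(2*(k:ℤ)) else 0) with ha
    have hsum : ∑ v : Fin (k+1), a v = 2 - 2*(k:ℤ) := by
      rw [ha]
      rw [Finset.sum_add_distrib, Finset.sum_add_distrib]
      rw [Finset.sum_ite_eq' Finset.univ (0 : Fin (k+1)) (fun _ => -(2*(k:ℤ)))]
      rw [Finset.sum_ite_eq' Finset.univ (Fin.last k) (fun _ => -(2*(k:ℤ)))]
      simp [Finset.sum_const, hcardV]
      ring
    have hsum_erase : ∀ w : Fin (k+1),
        ∑ v ∈ Finset.univ.erase w, a v = (2 - 2*(k:ℤ)) - a w := by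
      intro w
      rw [Finset.sum_erase_eq_sub (Finset.mem_univ w), hsum]
    have ha0 : a 0 = 2 - 2*(k:ℤ) := by simp [ha, hlast0.symm]; ring
    have hal : a (Fin.last k) = 2 - 2*(k:ℤ) := by simp [ha, hlast0]; ring
    intro E
    constructor
    · intro hE
      rcases Finset.mem_insert.1 hE with h | h
      · subst h
        exact ⟨Finset.subset_univ _, hcardE _,
          by rw [hsum_erase, hal]; simp⟩
      · rw [Finset.mem_singleton.1 h]
        exact ⟨Finset.subset_univ _, hcardE _,
          by rw [hsum_erase, ha0]; simp⟩
    · rintro ⟨-, hcard, hs⟩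
      -- E is the complement of a single vertex
      have hc : (Finset.univ \ E).card = 1 := by
        rw [Finset.card_sdiff_of_subset (Finset.subset_univ E), hcardV, hcard]
        omega
      obtain ⟨w, hwdef⟩ := Finset.card_eq_one.1 hc
      have hEw : E = Finset.univ.erase w := by
        have : Finset.univ \ (Finset.univ \ E) = E := by
          rw [Finset.sdiff_sdiff_self_left, Finset.inter_eq_right.2 (Finset.subset_univ E)]
        rw [← this, hwdef, Finset.sdiff_singleton_eq_erase]
      subst hEw
      rw [hsum_erase w] at hs
      have haw : a w ≤ 2 - 2*(k:ℤ) := by linarith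
      by_cases hw0 : w = 0
      · subst hw0
        exact Finset.mem_insert.2 (Or.inr (Finset.mem_singleton.2 rfl))
      · by_cases hwl : w = Fin.last k
        · subst hwl
          exact Finset.mem_insert.2 (Or.inl rfl)
        · exfalso
          have : a w = 2 := by simp [ha, hw0, hwl]
          rw [this] at haw
          have : (3:ℤ) ≤ (k:ℤ) := by exact_mod_cast hk
          linarith
end

section
/- For each k ≥ 3 and each n ≥ k+1, there exists a k-hypergraph on an n-element vertex set that is separable but not orderable. -/
variable {V : Type*} [DecidableEq V]

/-!
Label `⌈k/2⌉` vertices by `+1` and all others by `-1`, and let `H` consist of the `k`-sets of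
nonnegative label sum. Since `n ≥ k + 1` and `⌈k/2⌉ ≥ 2`, every vertex lies both in a `k`-set
with `⌈k/2⌉` positive vertices (an edge) and in one with `⌈k/2⌉ - 1` positive vertices (a
non-edge). So the last vertex of any ordering is neither dominating nor isolating.
-/

open Finset

theorem not_orderable_of_forall_mem_edge_and_nonedge {k : ℕ} {H : Finset (Finset V)}
    {W : Finset V} (hW : W.Nonempty)
    (hedge : ∀ v ∈ W, ∃ E ⊆ W, #E = k ∧ v ∈ E ∧ E ∈ H)
    (hnonedge : ∀ v ∈ W, ∃ E ⊆ W, #E = k ∧ v ∈ E ∧ E ∉ H) :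
    ¬ Orderable k H W := by
  rintro ⟨l, -, rfl, hl⟩
  have hlen : 0 < l.length := List.length_pos_iff.2 (by simpa using hW.ne_empty)
  let last : Fin l.length := ⟨l.length - 1, by omega⟩
  have hlast : l.get last ∈ l.toFinset := List.mem_toFinset.2 (List.get_mem _ _)
  have hprefix : ∀ E ⊆ l.toFinset, ∀ x ∈ E, x ∈ l.take (last + 1) := fun E hE x hx => by
    rw [List.take_of_length_le (by simp only [last]; omega)]
    exact List.mem_toFinset.1 (hE hx)
  rcases hl last with hdom | hiso
  · obtain ⟨E, hEW, hEk, hvE, hEH⟩ := hnonedge _ hlast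
    exact hEH (hdom E hEk hvE (hprefix E hEW))
  · obtain ⟨E, hEW, hEk, hvE, hEH⟩ := hedge _ hlast
    exact hiso E hEk hvE (hprefix E hEW) hEH

def threshold {α : Type*} (k : ℕ) (a : α → ℤ) (W : Finset α) : Finset (Finset α) :=
  (W.powersetCard k).filter fun E => 0 ≤ ∑ v ∈ E, a v

theorem mem_threshold {α : Type*} {k : ℕ} {a : α → ℤ} {W E : Finset α} :
    E ∈ threshold k a W ↔ E ⊆ W ∧ #E = k ∧ 0 ≤ ∑ v ∈ E, a v := by
  simp [threshold, mem_powersetCard, and_assoc]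

theorem separable_threshold {α : Type*} (k : ℕ) (a : α → ℤ) (W : Finset α) :
    Separable k (threshold k a W) W :=
  ⟨a, fun _ => mem_threshold⟩

def signLabel (P : Finset V) (v : V) : ℤ :=
  if v ∈ P then 1 else -1

theorem sum_signLabel (P E : Finset V) :
    ∑ v ∈ E, signLabel P v = #(E ∩ P) - #(E \ P) := by
  simp [signLabel, sum_ite, filter_mem_eq_inter, filter_notMem_eq_sdiff, sub_eq_add_neg]

theorem exists_subset_card_eq_of_mem {α : Type*} {S : Finset α} {m : ℕ} (v : α)
    (hm : m ≤ #S) (hvm : v ∈ S → 0 < m) : ∃ T ⊆ S, #T = m ∧ (v ∈ S → v ∈ T) := by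
  by_cases hv : v ∈ S
  · obtain ⟨T, hvT, hTS, hT⟩ :=
      exists_subsuperset_card_eq (singleton_subset_iff.2 hv)
        (by rw [card_singleton]; exact hvm hv) hm
    exact ⟨T, hTS, hT, fun _ => singleton_subset_iff.1 hvT⟩
  · obtain ⟨T, hTS, hT⟩ := exists_subset_card_eq hm
    exact ⟨T, hTS, hT, fun h => absurd h hv⟩

theorem exists_mem_card_inter_card_sdiff [Fintype V] (P : Finset V) (v : V) {s t : ℕ}
    (hs : s ≤ #P) (ht : t ≤ #Pᶜ) (hvs : v ∈ P → 0 < s) (hvt : v ∉ P → 0 < t) :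
    ∃ E : Finset V, v ∈ E ∧ #(E ∩ P) = s ∧ #(E \ P) = t := by
  obtain ⟨A, hAP, hA, hvA⟩ := exists_subset_card_eq_of_mem v hs hvs
  obtain ⟨B, hBP, hB, hvB⟩ := exists_subset_card_eq_of_mem v ht (by simpa using hvt)
  have hAinter : (A ∪ B) ∩ P = A := by ext x; grind [mem_compl]
  have hBsdiff : (A ∪ B) \ P = B := by ext x; grind [mem_compl]
  refine ⟨A ∪ B, ?_, by rw [hAinter, hA], by rw [hBsdiff, hB]⟩
  by_cases hv : v ∈ P
  · exact mem_union_left _ (hvA hv)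
  · exact mem_union_right _ (hvB (mem_compl.2 hv))

theorem exists_mem_threshold_signLabel_iff [Fintype V] (P : Finset V) (v : V) {s t : ℕ}
    (hs : s ≤ #P) (ht : t ≤ #Pᶜ) (hvs : v ∈ P → 0 < s) (hvt : v ∉ P → 0 < t) :
    ∃ E : Finset V, #E = s + t ∧ v ∈ E ∧
      (E ∈ threshold (s + t) (signLabel P) univ ↔ t ≤ s) := by
  obtain ⟨E, hvE, hs', ht'⟩ := exists_mem_card_inter_card_sdiff P v hs ht hvs hvt
  have hE : #E = s + t := by rw [← card_inter_add_card_sdiff E P, hs', ht']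
  refine ⟨E, hE, hvE, ?_⟩
  rw [mem_threshold, sum_signLabel, hs', ht']
  simp only [subset_univ, hE, true_and, sub_nonneg, Nat.cast_le]

theorem not_orderable_threshold_signLabel [Fintype V] {k : ℕ} (P : Finset V) (hk : 3 ≤ k)
    (hPk : k ≤ 2 * #P) (hPk' : 2 * #P ≤ k + 1) (hV : k + 1 ≤ Fintype.card V) :
    ¬ Orderable k (threshold k (signLabel P) univ) univ := by
  have hPc : #Pᶜ = Fintype.card V - #P := card_compl P
  refine not_orderable_of_forall_mem_edge_and_nonedge
    (univ_nonempty_iff.2 (Fintype.card_pos_iff.1 (by omega))) (fun v _ => ?_) (fun v _ => ?_)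
  · obtain ⟨E, hE, hvE, hiff⟩ := exists_mem_threshold_signLabel_iff P v (s := #P)
      (t := k - #P) le_rfl (by omega) (fun _ => by omega) (fun _ => by omega)
    rw [show #P + (k - #P) = k by omega] at hE hiff
    exact ⟨E, subset_univ E, hE, hvE, hiff.2 (by omega)⟩
  · obtain ⟨E, hE, hvE, hiff⟩ := exists_mem_threshold_signLabel_iff P v (s := #P - 1)
      (t := k - #P + 1) (by omega) (by omega) (fun _ => by omega) (fun _ => by omega)
    rw [show #P - 1 + (k - #P + 1) = k by omega] at hE hiff
    exact ⟨E, subset_univ E, hE, hvE, fun h => by have := hiff.1 h; omega⟩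

/-- For each `k ≥ 3` and each `n ≥ k + 1` there is a
`k`-hypergraph on an `n`-element vertex set that is separable but not orderable. -/
theorem exists_separable_not_orderable (k n : ℕ) (hk : 3 ≤ k) (hn : k + 1 ≤ n) :
    ∃ H : Finset (Finset (Fin n)),
      (∀ E ∈ H, E.card = k) ∧
      Separable k H Finset.univ ∧
      ¬ Orderable k H Finset.univ := by
  obtain ⟨P, -, hP⟩ := exists_subset_card_eq (s := (univ : Finset (Fin n))) (n := (k + 1) / 2)
    (by simp; omega)
  refine ⟨threshold k (signLabel P) univ, fun E hE => (mem_threshold.1 hE).2.1,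
    separable_threshold k _ univ, ?_⟩
  exact not_orderable_threshold_signLabel P hk (by omega) (by omega) (by simpa using hn)
end

section
/- Let H be an orderable k-hypergraph on V and let v ∈ V be a vertex such that either E ∈ H for every k-set E with v ∈ E ⊆ V, or E ∉ H for every k-set E with v ∈ E ⊆ V. Then H has an elimination order in which v comes last. -/
variable {V : Type*} [DecidableEq V]

omit [DecidableEq V] in
private lemma elim_transfer (k : ℕ) (H : Finset (Finset V)) (l l' : List V)
    (i : Fin l'.length) (j : Fin l.length)
    (hget : l'.get i = l.get j)
    (hsub : ∀ x ∈ l'.take ((i : ℕ) + 1), x ∈ l.take ((j : ℕ) + 1))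
    (h : DomAt k H l j ∨ IsoAt k H l j) :
    DomAt k H l' i ∨ IsoAt k H l' i := by
  rcases h with h | h
  · exact Or.inl fun E hE hvE hEsub =>
      h E hE (hget ▸ hvE) fun x hx => hsub x (hEsub x hx)
  · exact Or.inr fun E hE hvE hEsub =>
      h E hE (hget ▸ hvE) fun x hx => hsub x (hEsub x hx)

/-- If `H` is orderable and `v` is a vertex such that either every
`k`-set through `v` is an edge, or no `k`-set through `v` is an edge, then `H` has
an elimination order in which `v` comes last. -/
theorem orderable_elim_order_with_last (k : ℕ) (H : Finset (Finset V)) (W : Finset V)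
    (hord : Orderable k H W) (v : V) (hv : v ∈ W)
    (hcond : (∀ E : Finset V, E.card = k → v ∈ E → E ⊆ W → E ∈ H) ∨
             (∀ E : Finset V, E.card = k → v ∈ E → E ⊆ W → E ∉ H)) :
    ∃ l : List V, l.Nodup ∧ l.toFinset = W ∧ IsElimOrder k H l ∧
      l.getLast? = some v := by
  obtain ⟨l, hnd, hW, helim⟩ := hord
  have hvl : v ∈ l := by rw [← List.mem_toFinset, hW]; exact hv
  obtain ⟨l₁, l₂, rfl⟩ := List.append_of_mem hvl
  have hperm : (l₁ ++ (l₂ ++ [v])).Perm (l₁ ++ v :: l₂) :=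
    List.Perm.append_left l₁ List.perm_append_comm
  have hndL' : (l₁ ++ (l₂ ++ [v])).Nodup := hperm.nodup_iff.mpr hnd
  have hWL' : (l₁ ++ (l₂ ++ [v])).toFinset = W := by
    rw [List.toFinset_eq_of_perm _ _ hperm, hW]
  have hlen' : (l₁ ++ (l₂ ++ [v])).length = l₁.length + l₂.length + 1 := by
    simp; omega
  have hlenL : (l₁ ++ v :: l₂).length = l₁.length + l₂.length + 1 := by
    simp; omega
  refine ⟨l₁ ++ (l₂ ++ [v]), hndL', hWL', ?_, ?_⟩
  · intro i
    have hilt : (i : ℕ) < l₁.length + l₂.length + 1 := hlen' ▸ i.isLt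
    rcases lt_or_ge (i : ℕ) l₁.length with hi | hi
    · -- inside l₁
      refine elim_transfer k H _ _ i ⟨i, by omega⟩ ?_ ?_ (helim _)
      · simp only [List.get_eq_getElem]
        rw [List.getElem_append_left hi]
        exact (List.getElem_append_left hi).symm
      · intro x hx
        show x ∈ (l₁ ++ v :: l₂).take ((i : ℕ) + 1)
        rw [List.take_append_of_le_length (by omega)]
        rwa [List.take_append_of_le_length (by omega)] at hx
    · rcases lt_or_ge (i : ℕ) (l₁.length + l₂.length) with hi2 | hi2
      · -- inside l₂
        obtain ⟨m, hm⟩ : ∃ m, (i : ℕ) = l₁.length + m := ⟨(i : ℕ) - l₁.length, by omega⟩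
        have hm2 : m < l₂.length := by omega
        refine elim_transfer k H _ _ i ⟨(i : ℕ) + 1, by omega⟩ ?_ ?_ (helim _)
        · simp only [List.get_eq_getElem]
          rw [List.getElem_append_right (by omega : l₁.length ≤ (i : ℕ)),
            List.getElem_append_right (by omega : l₁.length ≤ (i : ℕ) + 1)]
          have e1 : (i : ℕ) - l₁.length = m := by omega
          have e2 : (i : ℕ) + 1 - l₁.length = m + 1 := by omega
          simp only [e1, e2]
          rw [List.getElem_append_left hm2, List.getElem_cons_succ]
        · intro x hx
          show x ∈ (l₁ ++ v :: l₂).take ((i : ℕ) + 1 + 1)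
          rw [List.take_append, List.take_of_length_le (by omega)]
          rw [List.take_append, List.take_of_length_le (by omega)] at hx
          have e2 : (i : ℕ) + 1 - l₁.length = m + 1 := by omega
          have e3 : (i : ℕ) + 1 + 1 - l₁.length = m + 2 := by omega
          rw [e2, List.take_append_of_le_length (by omega)] at hx
          rw [e3, List.take_succ_cons]
          simp only [List.mem_append, List.mem_cons] at hx ⊢
          tauto
      · -- last position: v
        have hieq : (i : ℕ) = l₁.length + l₂.length := by omega
        have hget : (l₁ ++ (l₂ ++ [v])).get i = v := by
          simp only [List.get_eq_getElem]
          rw [List.getElem_append_right (by omega : l₁.length ≤ (i : ℕ)),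
            List.getElem_append_right (by omega : l₂.length ≤ (i : ℕ) - l₁.length)]
          simp
        have hsubW : ∀ E : Finset V,
            (∀ x ∈ E, x ∈ (l₁ ++ (l₂ ++ [v])).take ((i : ℕ) + 1)) → E ⊆ W := by
          intro E hE x hx
          have := hE x hx
          rw [List.take_of_length_le (by omega)] at this
          rw [← hWL']
          exact List.mem_toFinset.mpr this
        rcases hcond with h | h
        · exact Or.inl fun E hE hvE hEsub => h E hE (hget ▸ hvE) (hsubW E hEsub)
        · exact Or.inr fun E hE hvE hEsub => h E hE (hget ▸ hvE) (hsubW E hEsub)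
  · rw [← List.append_assoc, List.getLast?_concat]
end

section
/- Let H be an orderable k-hypergraph on V with |V| = n = km, with an elimination order v_1,...,v_n in which each vertex is designated dominating or isolating and all vertices v_j with j < k are designated dominating. For j = 1,...,n let d_j and i_j denote respectively the number of dominating and of isolating vertices with index at least j, and set r_j := (k-1)·d_j - i_j. Then H has a perfect matching if and only if r_j ≥ 0 for all j = 1,...,n. -/
/-!
Pass from vertices to positions in the elimination order. A `k`-set of positions whose last
position is dominating spans an edge, and one whose last position is isolating does not, so a
perfect matching of `H` is the same as a partition of the positions into `k`-sets whose last
element is dominating.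

The quantity `r_j` is additive over disjoint sets of positions and nonnegative on each such
block, which gives necessity. For sufficiency, the last position `t` is dominating (otherwise
`r_t < 0`). Group it with the `k - 1` latest isolating positions, topped up with arbitrary
dominating ones if there are too few. At every `j` where an isolating position survives, this
block has one dominating and `k - 1` isolating positions at or after `j`, so it contributes `0`
to `r_j`; hence all `r_j` stay nonnegative on the remaining positions, and induction on `m`
finishes.
-/

variable {V : Type*} [DecidableEq V]

open Finset

section Slack

variable {α : Type*} [LinearOrder α]

/-- The paper's `r_j`, for a set `S` of positions of which those in `D` are dominating. -/
def slack (k : ℕ) (D S : Finset α) (j : α) : ℤ :=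
  ((k : ℤ) - 1) * #{x ∈ S | j ≤ x ∧ x ∈ D} - #{x ∈ S | j ≤ x ∧ x ∉ D}

variable {k : ℕ} {D S T : Finset α}

theorem slack_union (h : Disjoint S T) (j : α) :
    slack k D (S ∪ T) j = slack k D S j + slack k D T j := by
  simp only [slack, filter_union, card_union_of_disjoint (disjoint_filter_filter h)]
  push_cast
  ring

theorem slack_biUnion {P : Finset (Finset α)} (hP : (P : Set (Finset α)).PairwiseDisjoint id)
    (j : α) : slack k D (P.biUnion id) j = ∑ B ∈ P, slack k D B j := by
  have hcard (q : α → Prop) [DecidablePred q] :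
      (#{x ∈ P.biUnion id | q x} : ℤ) = ∑ B ∈ P, (#{x ∈ B | q x} : ℤ) := by
    rw [filter_biUnion]
    exact_mod_cast card_biUnion (hP.mono fun B => filter_subset q B)
  simp only [slack, hcard, mul_sum, sum_sub_distrib]

theorem slack_nonneg_of_isGreatest {B : Finset α} {t : α} (hB : #B = k) (htD : t ∈ D)
    (ht : IsGreatest (B : Set α) t) (j : α) : 0 ≤ slack k D B j := by
  have hk : (1 : ℤ) ≤ k := by
    rw [← hB]; exact_mod_cast card_pos.2 ⟨t, ht.1⟩
  unfold slack
  by_cases hjt : j ≤ t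
  · have hdom : 1 ≤ #{x ∈ B | j ≤ x ∧ x ∈ D} := card_pos.2 ⟨t, mem_filter.2 ⟨ht.1, hjt, htD⟩⟩
    have hiso : #{x ∈ B | j ≤ x ∧ x ∉ D} ≤ #(B.erase t) := by
      refine card_le_card fun x hx => ?_
      obtain ⟨hxB, -, hxD⟩ := mem_filter.1 hx
      exact mem_erase.2 ⟨fun hxt => hxD (hxt ▸ htD), hxB⟩
    rw [card_erase_of_mem ht.1, hB] at hiso
    have hdom' : (1 : ℤ) ≤ #{x ∈ B | j ≤ x ∧ x ∈ D} := by exact_mod_cast hdom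
    have hiso' : (#{x ∈ B | j ≤ x ∧ x ∉ D} : ℤ) ≤ k - 1 := by omega
    nlinarith
  · have hiso : #{x ∈ B | j ≤ x ∧ x ∉ D} = 0 :=
      card_eq_zero.2 <| filter_eq_empty_iff.2 fun x hx h => hjt (h.1.trans (ht.2 hx))
    rw [hiso]
    push_cast
    nlinarith [(#{x ∈ B | j ≤ x ∧ x ∈ D}).cast_nonneg (α := ℤ)]

end Slack

theorem isPerfectMatching_image_map_iff {α β : Type*} [DecidableEq α] [DecidableEq β] (f : α ↪ β)
    {P : Finset (Finset α)} {S : Finset α} :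
    IsPerfectMatching (P.image (map f)) (S.map f) ↔ IsPerfectMatching P S := by
  have hdisj : (↑(P.image (map f)) : Set (Finset β)).PairwiseDisjoint id ↔
      (P : Set (Finset α)).PairwiseDisjoint id := by
    rw [coe_image, (map_injective f).injOn.pairwiseDisjoint_image]
    simp [Set.PairwiseDisjoint, Set.Pairwise, Function.onFun, disjoint_map]
  have hunion : (P.image (map f)).biUnion id = (P.biUnion id).map f := by
    ext x
    simp only [mem_biUnion, mem_image, id_eq, exists_exists_and_eq_and, mem_map]
    tauto
  rw [IsPerfectMatching, IsPerfectMatching, hdisj, hunion, (map_injective f).eq_iff]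

theorem IsPerfectMatching.insert {α : Type*} [DecidableEq α] {P : Finset (Finset α)}
    {S B : Finset α} (hP : IsPerfectMatching P (S \ B)) (hB : B ⊆ S) :
    IsPerfectMatching (insert B P) S := by
  refine ⟨?_, ?_⟩
  · rw [coe_insert]
    refine hP.1.insert fun C hC _ => ?_
    exact disjoint_sdiff.mono_right (hP.2 ▸ subset_biUnion_of_mem id hC)
  · rw [biUnion_insert, hP.2, id, union_sdiff_of_subset hB]

section Greedy

variable {α : Type*} [LinearOrder α]

theorem exists_subset_card_eq_largest_first (U : Finset α) (p : α → Prop) [DecidablePred p]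
    {n : ℕ} (hn : n ≤ #U) :
    ∃ B ⊆ U, #B = n ∧ ∀ y ∈ U \ B, p y → ∀ x ∈ B, p x ∧ y ≤ x := by
  induction n with
  | zero => exact ⟨∅, empty_subset U, card_empty, by simp⟩
  | succ n ih =>
    obtain ⟨B, hBU, hB, hup⟩ := ih (by omega)
    have hrest : (U \ B).Nonempty := by
      rw [← card_pos, card_sdiff_of_subset hBU]; omega
    have hextend : ∀ z ∈ U \ B, (∀ y ∈ U \ insert z B, p y → p z ∧ y ≤ z) →
        ∃ C ⊆ U, #C = n + 1 ∧ ∀ y ∈ U \ C, p y → ∀ x ∈ C, p x ∧ y ≤ x := by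
      intro z hz hzmax
      obtain ⟨hzU, hzB⟩ := mem_sdiff.1 hz
      refine ⟨insert z B, insert_subset hzU hBU, by rw [card_insert_of_notMem hzB, hB], ?_⟩
      intro y hy hpy x hx
      obtain rfl | hxB := mem_insert.1 hx
      · exact hzmax y hy hpy
      · exact hup y (sdiff_subset_sdiff le_rfl (subset_insert z B) hy) hpy x hxB
    by_cases hp : ({y ∈ U \ B | p y} : Finset α).Nonempty
    · obtain ⟨hzrest, hpz⟩ := mem_filter.1 (max'_mem _ hp)
      refine hextend _ hzrest fun y hy hpy => ⟨hpz, le_max' _ y (mem_filter.2 ⟨?_, hpy⟩)⟩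
      exact sdiff_subset_sdiff le_rfl (subset_insert _ B) hy
    · obtain ⟨z, hz⟩ := hrest
      refine hextend z hz fun y hy hpy => absurd ⟨y, mem_filter.2 ⟨?_, hpy⟩⟩ hp
      exact sdiff_subset_sdiff le_rfl (subset_insert z B) hy

end Greedy

section Blocks

variable {α : Type*} [LinearOrder α] {k : ℕ} {D S : Finset α}

theorem slack_nonneg_of_isPerfectMatching {P : Finset (Finset α)} (hP : IsPerfectMatching P S)
    (hblocks : ∀ B ∈ P, #B = k ∧ ∃ t ∈ D, IsGreatest (B : Set α) t) (j : α) :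
    0 ≤ slack k D S j := by
  rw [← hP.2, slack_biUnion hP.1]
  refine sum_nonneg fun B hB => ?_
  obtain ⟨hBk, t, htD, ht⟩ := hblocks B hB
  exact slack_nonneg_of_isGreatest hBk htD ht j

theorem mem_of_slack_nonneg_of_isGreatest {t : α} (ht : IsGreatest (S : Set α) t)
    (h : 0 ≤ slack k D S t) : t ∈ D := by
  by_contra htD
  have hdom : #{x ∈ S | t ≤ x ∧ x ∈ D} = 0 :=
    card_eq_zero.2 <| filter_eq_empty_iff.2 fun x hx hxD =>
      htD (le_antisymm (ht.2 hx) hxD.1 ▸ hxD.2)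
  have hiso : 0 < #{x ∈ S | t ≤ x ∧ x ∉ D} := card_pos.2 ⟨t, mem_filter.2 ⟨ht.1, le_rfl, htD⟩⟩
  simp only [slack, hdom] at h
  omega

theorem slack_sdiff_insert_nonneg (hk : 0 < k) (hS : ∀ j, 0 ≤ slack k D S j) {t : α}
    (ht : IsGreatest (S : Set α) t) (htD : t ∈ D) {B : Finset α} (hBS : B ⊆ S.erase t)
    (hB : #B = k - 1) (hup : ∀ y ∈ S.erase t \ B, y ∉ D → ∀ x ∈ B, x ∉ D ∧ y ≤ x) (j : α) :
    0 ≤ slack k D (S \ insert t B) j := by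
  by_cases hlate : ∃ y ∈ S \ insert t B, j ≤ y ∧ y ∉ D
  · obtain ⟨y, hy, hjy, hyD⟩ := hlate
    have hyrest : y ∈ S.erase t \ B := by
      simp only [mem_sdiff, mem_insert, not_or, mem_erase] at hy ⊢
      exact ⟨⟨hy.2.1, hy.1⟩, hy.2.2⟩
    have hBj : ∀ x ∈ B, j ≤ x ∧ x ∉ D := fun x hx =>
      ⟨hjy.trans (hup y hyrest hyD x hx).2, (hup y hyrest hyD x hx).1⟩
    have hblock : slack k D (insert t B) j = 0 := by
      rw [slack, filter_insert, filter_insert, if_pos ⟨hjy.trans (ht.2 (mem_sdiff.1 hy).1), htD⟩,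
        if_neg fun h => h.2 htD, filter_false_of_mem fun x hx h => (hBj x hx).2 h.2,
        filter_true_of_mem hBj, insert_empty, card_singleton, hB, Nat.cast_sub hk]
      ring
    have hsplit := slack_union (k := k) (D := D) (disjoint_sdiff (s := insert t B) (t := S)) j
    rw [union_sdiff_of_subset (insert_subset ht.1 (hBS.trans (erase_subset t S))), hblock] at hsplit
    linarith [hS j]
  · have hiso : #{x ∈ S \ insert t B | j ≤ x ∧ x ∉ D} = 0 :=
      card_eq_zero.2 <| filter_eq_empty_iff.2 fun x hx hxD => hlate ⟨x, hx, hxD⟩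
    rw [slack, hiso]
    have : (1 : ℤ) ≤ k := by exact_mod_cast hk
    push_cast
    nlinarith [(#{x ∈ S \ insert t B | j ≤ x ∧ x ∈ D}).cast_nonneg (α := ℤ)]

theorem exists_perfectMatching_of_slack_nonneg {m : ℕ} (hS : #S = k * m)
    (hslack : ∀ j, 0 ≤ slack k D S j) :
    ∃ P : Finset (Finset α), IsPerfectMatching P S ∧
      ∀ B ∈ P, #B = k ∧ ∃ t ∈ D, IsGreatest (B : Set α) t := by
  induction m generalizing S with
  | zero => exact ⟨∅, by simp_all [IsPerfectMatching]⟩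
  | succ m ih =>
    obtain rfl | hne := S.eq_empty_or_nonempty
    · exact ⟨∅, by simp [IsPerfectMatching]⟩
    have hk : 0 < k := Nat.pos_of_ne_zero fun hk => by simp_all
    have ht := S.isGreatest_max' hne
    set t := S.max' hne
    have htD : t ∈ D := mem_of_slack_nonneg_of_isGreatest ht (hslack t)
    obtain ⟨B, hBS, hB, hup⟩ := exists_subset_card_eq_largest_first (S.erase t) (· ∉ D)
      (n := k - 1) (by rw [card_erase_of_mem ht.1, hS, mul_add_one]; omega)
    have htB : t ∉ B := fun h => (mem_erase.1 (hBS h)).1 rfl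
    have hblock : insert t B ⊆ S := insert_subset ht.1 (hBS.trans (erase_subset t S))
    have hcard : #(S \ insert t B) = k * m := by
      rw [card_sdiff_of_subset hblock, card_insert_of_notMem htB, hB, hS]
      rw [Nat.sub_add_cancel hk, mul_add_one, Nat.add_sub_cancel]
    obtain ⟨P, hP, hblocks⟩ :=
      ih hcard (slack_sdiff_insert_nonneg hk hslack ht htD hBS hB hup)
    refine ⟨insert (insert t B) P, hP.insert hblock, fun C hC => ?_⟩
    obtain rfl | hC := mem_insert.1 hC
    · exact ⟨by rw [card_insert_of_notMem htB, hB, Nat.sub_add_cancel hk],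
        t, htD, mem_insert_self t B, fun x hx => ht.2 (hblock hx)⟩
    · exact hblocks C hC

theorem exists_perfectMatching_iff_slack_nonneg {m : ℕ} (hS : #S = k * m) :
    (∃ P : Finset (Finset α), IsPerfectMatching P S ∧
      ∀ B ∈ P, #B = k ∧ ∃ t ∈ D, IsGreatest (B : Set α) t) ↔ ∀ j, 0 ≤ slack k D S j :=
  ⟨fun ⟨_, hP, hblocks⟩ => slack_nonneg_of_isPerfectMatching hP hblocks,
    exists_perfectMatching_of_slack_nonneg hS⟩

end Blocks

theorem length_filter_drop_eq_card {β : Type*} (l : List β) (p : β → Bool) (j : ℕ) :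
    ((l.drop j).filter p).length = #{i : Fin l.length | j ≤ i ∧ p (l.get i)} := by
  have hnodup : (((List.finRange l.length).drop j).filter (p ∘ l.get)).Nodup :=
    ((List.nodup_finRange _).sublist (List.drop_sublist _ _)).filter _
  conv_lhs => rw [← List.map_get_finRange l]
  rw [← List.map_drop, List.filter_map, List.length_map, ← List.toFinset_card_of_nodup hnodup]
  congr 1
  ext i
  simp only [List.mem_toFinset, List.mem_filter, List.mem_drop_iff_getElem,
    List.getElem_finRange, mem_filter, mem_univ, true_and, Function.comp_apply]
  constructor
  · rintro ⟨⟨a, ha, rfl⟩, hp⟩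
    exact ⟨by simp only [Fin.cast_mk, le_add_iff_nonneg_right, zero_le], hp⟩
  · rintro ⟨hj, hp⟩
    refine ⟨⟨i - j, by rw [List.length_finRange]; omega, ?_⟩, hp⟩
    ext
    simp only [Fin.cast_mk]
    omega

theorem slack_positions_eq_length_filter_drop (k : ℕ) (l : List V) (D : Finset V)
    (j : Fin l.length) :
    slack k {i | l.get i ∈ D} univ j =
      ((k : ℤ) - 1) * (((l.drop j).filter fun x => x ∈ D).length : ℤ) -
        (((l.drop j).filter fun x => x ∉ D).length : ℤ) := by
  simp [slack, length_filter_drop_eq_card]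

def List.Nodup.getEmbedding {l : List V} (hl : l.Nodup) : Fin l.length ↪ V :=
  ⟨l.get, List.nodup_iff_injective_get.1 hl⟩

section Hypergraph

variable {k : ℕ} {H : Finset (Finset V)} {l : List V} {D : Finset V}

theorem List.Nodup.toFinset_eq_map_getEmbedding (hl : l.Nodup) :
    l.toFinset = univ.map hl.getEmbedding := by
  ext x
  simp [List.Nodup.getEmbedding, List.mem_iff_get]

omit [DecidableEq V] in
theorem map_getEmbedding_mem_iff (hl : l.Nodup)
    (hdes : ∀ i : Fin l.length, (l.get i ∈ D → DomAt k H l i) ∧ (l.get i ∉ D → IsoAt k H l i))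
    {B : Finset (Fin l.length)} {t : Fin l.length} (hB : #B = k) (ht : IsGreatest (B : Set _) t) :
    B.map hl.getEmbedding ∈ H ↔ l.get t ∈ D := by
  have hcard : #(B.map hl.getEmbedding) = k := by rw [card_map, hB]
  have hmem : l.get t ∈ B.map hl.getEmbedding := mem_map_of_mem hl.getEmbedding ht.1
  have htake : ∀ x ∈ B.map hl.getEmbedding, x ∈ l.take (t + 1) := by
    intro x hx
    obtain ⟨i, hi, rfl⟩ := mem_map.1 hx
    exact List.mem_take_iff_getElem.2 ⟨i, by have := ht.2 hi; omega, rfl⟩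
  exact ⟨fun hE => by_contra fun hD => (hdes t).2 hD _ hcard hmem htake hE,
    fun hD => (hdes t).1 hD _ hcard hmem htake⟩

theorem exists_perfectMatching_iff_positions (hl : l.Nodup)
    (hH : ∀ E ∈ H, E ⊆ l.toFinset ∧ E.card = k)
    (hdes : ∀ i : Fin l.length, (l.get i ∈ D → DomAt k H l i) ∧ (l.get i ∉ D → IsoAt k H l i))
    (hk : 0 < k) :
    (∃ M ⊆ H, IsPerfectMatching M l.toFinset) ↔
      ∃ P : Finset (Finset (Fin l.length)), IsPerfectMatching P univ ∧
        ∀ B ∈ P, #B = k ∧ ∃ t ∈ ({i | l.get i ∈ D} : Finset _), IsGreatest (B : Set _) t := by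
  rw [hl.toFinset_eq_map_getEmbedding] at hH ⊢
  constructor
  · rintro ⟨M, hMH, hM⟩
    have hMimage : M ⊆ univ.image (map hl.getEmbedding) := fun E hE => by
      obtain ⟨B, -, rfl⟩ := subset_map_iff.1 (hH E (hMH hE)).1
      exact mem_image_of_mem _ (mem_univ B)
    obtain ⟨P, -, rfl⟩ := subset_image_iff.1 hMimage
    refine ⟨P, (isPerfectMatching_image_map_iff _).1 hM, fun B hB => ?_⟩
    have hE := hMH (mem_image_of_mem _ hB)
    have hBk : #B = k := by rw [← card_map hl.getEmbedding, (hH _ hE).2]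
    have hne : B.Nonempty := card_pos.1 (hBk ▸ hk)
    refine ⟨hBk, B.max' hne, ?_, B.isGreatest_max' hne⟩
    simpa using (map_getEmbedding_mem_iff hl hdes hBk (B.isGreatest_max' hne)).1 hE
  · rintro ⟨P, hP, hblocks⟩
    refine ⟨P.image (map hl.getEmbedding), fun E hE => ?_, (isPerfectMatching_image_map_iff _).2 hP⟩
    obtain ⟨B, hB, rfl⟩ := mem_image.1 hE
    obtain ⟨hBk, t, htD, ht⟩ := hblocks B hB
    exact (map_getEmbedding_mem_iff hl hdes hBk ht).2 (by simpa using htD)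

end Hypergraph

theorem perfect_matching_iff_r_nonneg_general (k m : ℕ) (H : Finset (Finset V))
    (l : List V) (D : Finset V)
    (hl : l.Nodup) (hlen : l.length = k * m)
    (hH : ∀ E ∈ H, E ⊆ l.toFinset ∧ E.card = k)
    (hdes : ∀ i : Fin l.length,
      (l.get i ∈ D → DomAt k H l i) ∧ (l.get i ∉ D → IsoAt k H l i)) :
    (∃ M : Finset (Finset V), M ⊆ H ∧ IsPerfectMatching M l.toFinset) ↔
      ∀ j < l.length,
        0 ≤ ((k : ℤ) - 1) * (((l.drop j).filter fun x => x ∈ D).length : ℤ) -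
              (((l.drop j).filter fun x => x ∉ D).length : ℤ) := by
  obtain rfl | hk := Nat.eq_zero_or_pos k
  · rw [zero_mul, List.length_eq_zero_iff] at hlen
    subst hlen
    exact ⟨fun _ j hj => absurd hj (Nat.not_lt_zero j),
      fun _ => ⟨∅, empty_subset H, by simp [IsPerfectMatching]⟩⟩
  rw [exists_perfectMatching_iff_positions hl hH hdes hk,
    exists_perfectMatching_iff_slack_nonneg (m := m) (by rw [card_univ, Fintype.card_fin, hlen]),
    Fin.forall_iff]
  simp only [slack_positions_eq_length_filter_drop]

/-- Let `H` be an orderable `k`-hypergraph with `n = k·m` vertices,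
with an elimination order in which each vertex is designated dominating (member of
`D`) or isolating, the first `k - 1` vertices being designated dominating. With
`r_j = (k-1)·d_j - i_j`, where `d_j` (resp. `i_j`) is the number of designated
dominating (resp. isolating) vertices of index at least `j`, `H` has a perfect
matching iff all `r_j` are nonnegative. -/
theorem perfect_matching_iff_r_nonneg (k m : ℕ) (H : Finset (Finset V))
    (l : List V) (D : Finset V)
    (hl : l.Nodup) (hlen : l.length = k * m)
    (hH : ∀ E ∈ H, E ⊆ l.toFinset ∧ E.card = k)
    (hdes : ∀ i : Fin l.length,
      (l.get i ∈ D → DomAt k H l i) ∧ (l.get i ∉ D → IsoAt k H l i))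
    (hfirst : ∀ i : Fin l.length, (i : ℕ) + 1 < k → l.get i ∈ D) :
    (∃ M : Finset (Finset V), M ⊆ H ∧ IsPerfectMatching M l.toFinset) ↔
      ∀ j < l.length,
        0 ≤ ((k : ℤ) - 1) * (((l.drop j).filter fun x => x ∈ D).length : ℤ) -
              (((l.drop j).filter fun x => x ∉ D).length : ℤ) :=
  perfect_matching_iff_r_nonneg_general k m H l D hl hlen hH hdes
end

section
/- Let H be an orderable k-hypergraph on V, k ≥ 2, with elimination order v_1,...,v_n, each vertex designated dominating or isolating, and suppose some r_i := (k-1)·d_i - i_i is negative, where d_i and i_i are the numbers of designated dominating and isolating vertices with index at least i. Then H has no perfect matching. -/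
variable {V : Type*} [DecidableEq V]

lemma mem_take_of_indexOf_lt {l : List V} {x : V} {n : ℕ} (hx : x ∈ l)
    (h : l.idxOf x < n) : x ∈ l.take n := by
  have hlt : l.idxOf x < l.length := List.idxOf_lt_length_iff.2 hx
  have h2 : (l.take n)[l.idxOf x]? = some x := by
    rw [List.getElem?_take_of_lt h, List.getElem?_eq_getElem hlt, List.getElem_idxOf]
  exact List.mem_of_getElem? h2

lemma mem_drop_iff_of_nodup {l : List V} (hl : l.Nodup) {x : V} {j : ℕ} :
    x ∈ l.drop j ↔ x ∈ l ∧ j ≤ l.idxOf x := by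
  constructor
  · intro h
    obtain ⟨i, hi, hix⟩ := List.getElem_of_mem h
    rw [List.getElem_drop] at hix
    have hmem : x ∈ l := hix ▸ List.getElem_mem _
    refine ⟨hmem, ?_⟩
    have hlt : l.idxOf x < l.length := List.idxOf_lt_length_iff.2 hmem
    have hji : j + i < l.length := by
      have h' := hi; rw [List.length_drop] at h'; omega
    have heq : l[l.idxOf x] = l[j + i]'hji := by
      rw [List.getElem_idxOf, hix]
    rw [List.Nodup.getElem_inj_iff hl] at heq
    omega
  · rintro ⟨hx, hj⟩
    have hlt : l.idxOf x < l.length := List.idxOf_lt_length_iff.2 hx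
    have h2 : l.idxOf x - j < (l.drop j).length := by simp [List.length_drop]; omega
    have h3 : (l.drop j)[l.idxOf x - j] = x := by
      rw [List.getElem_drop]
      have : j + (l.idxOf x - j) = l.idxOf x := by omega
      simp_rw [this]
      exact List.getElem_idxOf hlt
    exact h3 ▸ List.getElem_mem _


/-- If `H` is a `k`-hypergraph, `k ≥ 2`, with an elimination
order in which each vertex is designated dominating (member of `D`) or isolating,
and some `r_j = (k-1)·d_j - i_j` is negative, then `H` has no perfect matching. -/
theorem no_perfect_matching_of_r_neg (k : ℕ) (hk : 2 ≤ k) (H : Finset (Finset V))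
    (l : List V) (D : Finset V) (hl : l.Nodup)
    (hH : ∀ E ∈ H, E ⊆ l.toFinset ∧ E.card = k)
    (hdes : ∀ i : Fin l.length,
      (l.get i ∈ D → DomAt k H l i) ∧ (l.get i ∉ D → IsoAt k H l i))
    (hneg : ∃ j < l.length,
      ((k : ℤ) - 1) * (((l.drop j).filter fun x => x ∈ D).length : ℤ) -
        (((l.drop j).filter fun x => x ∉ D).length : ℤ) < 0) :
    ¬ ∃ M : Finset (Finset V), M ⊆ H ∧ IsPerfectMatching M l.toFinset := by
  rintro ⟨M, hMH, hdisj, hunion⟩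
  obtain ⟨j, hj, hr⟩ := hneg
  classical
  -- every edge of M has a "top" vertex, which is dominating (in D)
  have hex : ∀ E : Finset V, ∃ v : V, E ∈ M →
      v ∈ E ∧ (∀ w ∈ E, l.idxOf w ≤ l.idxOf v) ∧ v ∈ D := by
    intro E
    by_cases hE : E ∈ M
    · obtain ⟨hsub, hcard⟩ := hH E (hMH hE)
      have hne : E.Nonempty := Finset.card_pos.1 (by omega)
      obtain ⟨v, hv, hmax⟩ := Finset.exists_max_image E (fun w => l.idxOf w) hne
      refine ⟨v, fun _ => ⟨hv, hmax, ?_⟩⟩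
      have hvl : v ∈ l := by simpa using hsub hv
      have hlt : l.idxOf v < l.length := List.idxOf_lt_length_iff.2 hvl
      by_contra hvD
      have hget : l.get ⟨l.idxOf v, hlt⟩ = v := List.getElem_idxOf hlt
      have hiso := (hdes ⟨l.idxOf v, hlt⟩).2 (by rw [hget]; exact hvD)
      exact hiso E hcard (by rw [hget]; exact hv)
        (fun x hx => mem_take_of_indexOf_lt (by simpa using hsub hx)
          (Nat.lt_succ_of_le (hmax x hx))) (hMH hE)
    · exact ⟨l.get ⟨j, hj⟩, fun h => absurd h hE⟩
  choose top htop using hex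
  have htopE : ∀ E ∈ M, top E ∈ E := fun E hE => (htop E hE).1
  have htopMax : ∀ E ∈ M, ∀ w ∈ E, l.idxOf w ≤ l.idxOf (top E) :=
    fun E hE => (htop E hE).2.1
  have htopD : ∀ E ∈ M, top E ∈ D := fun E hE => (htop E hE).2.2
  set I : Finset V := (l.drop j).toFinset.filter (fun x => x ∉ D) with hI
  set Dd : Finset V := (l.drop j).toFinset.filter (fun x => x ∈ D) with hDd
  have hnd : (l.drop j).Nodup := (List.drop_sublist j l).nodup hl
  have hIfin : ((l.drop j).filter fun x => x ∉ D).toFinset = I := by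
    ext x; simp [hI]
  have hDfin : ((l.drop j).filter fun x => x ∈ D).toFinset = Dd := by
    ext x; simp [hDd]
  have hIcard : ((l.drop j).filter fun x => x ∉ D).length = I.card := by
    rw [← hIfin]; exact (List.toFinset_card_of_nodup (hnd.filter _)).symm
  have hDcard : ((l.drop j).filter fun x => x ∈ D).length = Dd.card := by
    rw [← hDfin]; exact (List.toFinset_card_of_nodup (hnd.filter _)).symm
  set M' : Finset (Finset V) := M.filter (fun E => (E ∩ I).Nonempty) with hM'
  -- I is covered by the sets E ∩ I, E ∈ M'
  have hIeq : I = M'.biUnion (fun E => E ∩ I) := by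
    ext v
    simp only [Finset.mem_biUnion, hM', Finset.mem_filter]
    constructor
    · intro hv
      have hvl : v ∈ l.toFinset := by
        have := (Finset.mem_filter.1 hv).1
        rw [List.mem_toFinset] at this ⊢
        exact List.mem_of_mem_drop this
      rw [← hunion] at hvl
      obtain ⟨E, hE, hvE⟩ := Finset.mem_biUnion.1 hvl
      exact ⟨E, ⟨hE, ⟨v, Finset.mem_inter.2 ⟨hvE, hv⟩⟩⟩, Finset.mem_inter.2 ⟨hvE, hv⟩⟩
    · rintro ⟨E, _, hvE⟩
      exact (Finset.mem_inter.1 hvE).2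
  have hcardI : I.card = ∑ E ∈ M', (E ∩ I).card := by
    conv_lhs => rw [hIeq]
    refine Finset.card_biUnion ?_
    intro E₁ h₁ E₂ h₂ hne
    have := hdisj (Finset.mem_filter.1 h₁).1 (Finset.mem_filter.1 h₂).1 hne
    exact (this.mono (Finset.inter_subset_left) (Finset.inter_subset_left))
  -- each E ∩ I has at most k-1 elements
  have hper : ∀ E ∈ M', (E ∩ I).card ≤ k - 1 := by
    intro E hE'
    have hE : E ∈ M := (Finset.mem_filter.1 hE').1
    have hcard := (hH E (hMH hE)).2
    have hsub : E ∩ I ⊆ E.erase (top E) := by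
      intro x hx
      obtain ⟨hxE, hxI⟩ := Finset.mem_inter.1 hx
      refine Finset.mem_erase.2 ⟨?_, hxE⟩
      rintro rfl
      exact (Finset.mem_filter.1 hxI).2 (htopD E hE)
    calc (E ∩ I).card ≤ (E.erase (top E)).card := Finset.card_le_card hsub
      _ ≤ E.card - 1 := by
          rw [Finset.card_erase_of_mem (htopE E hE)]
      _ = k - 1 := by rw [hcard]
  -- top is injective from M' into Dd
  have hMDd : M'.card ≤ Dd.card := by
    apply Finset.card_le_card_of_injOn top
    · intro E hE'
      obtain ⟨hE, ⟨w, hw⟩⟩ := Finset.mem_filter.1 hE'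
      obtain ⟨hwE, hwI⟩ := Finset.mem_inter.1 hw
      have hsub := (hH E (hMH hE)).1
      have htl : top E ∈ l := by simpa using hsub (htopE E hE)
      have hwdrop : w ∈ l.drop j := by
        simpa using (Finset.mem_filter.1 hwI).1
      have hwj : j ≤ l.idxOf w := ((mem_drop_iff_of_nodup hl).1 hwdrop).2
      refine Finset.mem_filter.2 ⟨?_, htopD E hE⟩
      rw [List.mem_toFinset, mem_drop_iff_of_nodup hl]
      exact ⟨htl, le_trans hwj (htopMax E hE w hwE)⟩
    · intro E₁ h₁ E₂ h₂ heq
      by_contra hne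
      have hd := hdisj (Finset.mem_filter.1 h₁).1 (Finset.mem_filter.1 h₂).1 hne
      have := Finset.disjoint_left.1 hd (htopE E₁ (Finset.mem_filter.1 h₁).1)
      rw [heq] at this
      exact this (htopE E₂ (Finset.mem_filter.1 h₂).1)
  -- combine
  have hkey : I.card ≤ (k - 1) * Dd.card := by
    calc I.card = ∑ E ∈ M', (E ∩ I).card := hcardI
      _ ≤ ∑ _E ∈ M', (k - 1) := Finset.sum_le_sum hper
      _ = M'.card * (k - 1) := by rw [Finset.sum_const, smul_eq_mul]
      _ ≤ Dd.card * (k - 1) := Nat.mul_le_mul_right _ hMDd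
      _ = (k - 1) * Dd.card := Nat.mul_comm _ _
  rw [hIcard, hDcard] at hr
  have h1 : (I.card : ℤ) ≤ ((k - 1 : ℕ) : ℤ) * Dd.card := by exact_mod_cast hkey
  have h2 : ((k - 1 : ℕ) : ℤ) = (k : ℤ) - 1 := by
    have : 1 ≤ k := by omega
    push_cast [this]
    ring
  rw [h2] at h1
  linarith
end

section
/- Fix k ≥ 4. Let V be a finite set with |V| = 3m, let a : V → ℤ, and let H := {E ⊆ V : |E| = 3, a(E) ≥ 0} be nonempty. Set b := 1 + max{a(E) : E ⊆ V, |E| ≤ k}. Let V' := V ⊎ U where U is a set of (k-3)m new vertices, and define a' : V' → ℤ by a'(u) := 3b for u ∈ U and a'(v) := k·a(v) - (k-3)·b for v ∈ V. Let H' := {E ⊆ V' : |E| = k, a'(E) ≥ 0}. Then every edge E' ∈ H' satisfies |E' ∩ V| ≤ 3. -/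
variable {V : Type*} [DecidableEq V]

/-- In the reduction from separable 3-hypergraphs to separable
`k`-hypergraphs (`k ≥ 4`): with `|V| = 3m`, `H = {E : |E| = 3, a(E) ≥ 0} ≠ ∅`,
`b = 1 + max{a(E) : |E| ≤ k}`, `U` a set of `(k-3)m` new vertices, `a'(u) = 3b` on
`U` and `a'(v) = k·a(v) - (k-3)·b` on `V`, every edge `E'` of
`H' = {E' ⊆ V ⊎ U : |E'| = k, a'(E') ≥ 0}` satisfies `|E' ∩ V| ≤ 3`. -/
theorem reduction_edge_meets_V_le_three {V : Type*} [Fintype V] [DecidableEq V]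
    (k m : ℕ) (hk : 4 ≤ k) (hcard : Fintype.card V = 3 * m) (a : V → ℤ)
    (H : Finset (Finset V))
    (hH : ∀ E : Finset V, E ∈ H ↔ (E.card = 3 ∧ 0 ≤ ∑ v ∈ E, a v))
    (hne : H.Nonempty)
    (b : ℤ)
    (hb : IsGreatest {s : ℤ | ∃ E : Finset V, E.card ≤ k ∧ s = ∑ v ∈ E, a v} (b - 1))
    (a' : V ⊕ Fin ((k - 3) * m) → ℤ)
    (ha'V : ∀ v : V, a' (Sum.inl v) = (k : ℤ) * a v - ((k : ℤ) - 3) * b)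
    (ha'U : ∀ u : Fin ((k - 3) * m), a' (Sum.inr u) = 3 * b)
    (E' : Finset (V ⊕ Fin ((k - 3) * m)))
    (hE'card : E'.card = k) (hE'pos : 0 ≤ ∑ x ∈ E', a' x) :
    (E'.filter fun x => x.isLeft = true).card ≤ 3 := by
  classical
  by_contra hgt
  push_neg at hgt
  set S := E'.filter (fun x => x.isLeft = true) with hS
  set T := E'.filter (fun x => ¬ x.isLeft = true) with hT
  have hcardST : S.card + T.card = k := by
    rw [hS, hT, Finset.card_filter_add_card_filter_not, hE'card]
  -- F : the V-part of E'
  set F : Finset V := Finset.univ.filter (fun v => Sum.inl v ∈ E') with hF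
  have hSF : S = F.image Sum.inl := by
    ext x
    simp only [hS, hF, Finset.mem_filter, Finset.mem_image, Finset.mem_univ, true_and]
    constructor
    · rintro ⟨hx, hl⟩
      cases x with
      | inl v => exact ⟨v, hx, rfl⟩
      | inr u => simp at hl
    · rintro ⟨v, hv, rfl⟩
      exact ⟨hv, rfl⟩
  have hFcard : F.card = S.card := by
    rw [hSF, Finset.card_image_of_injective _ Sum.inl_injective]
  have hsumS : ∑ x ∈ S, a' x = (k : ℤ) * (∑ v ∈ F, a v) - ((k : ℤ) - 3) * b * F.card := by
    rw [hSF, Finset.sum_image (fun x _ y _ h => Sum.inl_injective h)]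
    rw [Finset.sum_congr rfl (fun v _ => ha'V v), Finset.sum_sub_distrib]
    rw [← Finset.mul_sum, Finset.sum_const, nsmul_eq_mul]
    ring
  have hsumT : ∑ x ∈ T, a' x = 3 * b * T.card := by
    have : ∀ x ∈ T, a' x = 3 * b := by
      rintro (v | u) hx
      · simp [hT] at hx
      · exact ha'U u
    rw [Finset.sum_congr rfl this, Finset.sum_const, nsmul_eq_mul]
    ring
  have hsplit : ∑ x ∈ E', a' x = ∑ x ∈ S, a' x + ∑ x ∈ T, a' x := by
    rw [hS, hT]
    exact (Finset.sum_filter_add_sum_filter_not _ _ _).symm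
  -- bounds
  have hSk : S.card ≤ k := by
    have := Finset.card_filter_le E' (fun x => x.isLeft = true)
    omega
  have hFa : ∑ v ∈ F, a v ≤ b - 1 := hb.2 ⟨F, hFcard ▸ hSk, rfl⟩
  have hb1 : 1 ≤ b := by
    obtain ⟨E, hE⟩ := hne
    obtain ⟨hE3, hE0⟩ := (hH E).1 hE
    have := hb.2 ⟨E, by omega, rfl⟩
    omega
  have ht4 : (4 : ℤ) ≤ S.card := by exact_mod_cast hgt
  have htk : (S.card : ℤ) ≤ k := by exact_mod_cast hSk
  have hk4 : (4 : ℤ) ≤ k := by exact_mod_cast hk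
  have hTc : (T.card : ℤ) = (k : ℤ) - S.card := by
    have : (S.card : ℤ) + T.card = k := by exact_mod_cast hcardST
    linarith
  rw [hsplit, hsumS, hsumT, hTc, hFcard] at hE'pos
  nlinarith [mul_le_mul_of_nonneg_left hFa (by linarith : (0:ℤ) ≤ k),
    mul_nonneg (by linarith : (0:ℤ) ≤ k) (by linarith : (0:ℤ) ≤ b),
    mul_nonneg (mul_nonneg (by linarith : (0:ℤ) ≤ k) (by linarith : (0:ℤ) ≤ b)) (by linarith : (0:ℤ) ≤ (S.card:ℤ) - 4)]
end

section
/- Fix k ≥ 4. Let V be a finite set with |V| = 3m, let a : V → ℤ, and let H := {E ⊆ V : |E| = 3, a(E) ≥ 0} be nonempty. Set b := 1 + max{a(E) : E ⊆ V, |E| ≤ k}. Let V' := V ⊎ U where U is a set of (k-3)m new vertices, and define a' : V' → ℤ by a'(u) := 3b for u ∈ U and a'(v) := k·a(v) - (k-3)·b for v ∈ V. Let H' := {E ⊆ V' : |E| = k, a'(E) ≥ 0}. Then H has a perfect matching if and only if H' has a perfect matching. -/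
variable {V : Type*} [DecidableEq V]

/-!
A `k`-set of `V ⊎ U` with `t` old vertices has `a'`-weight `k · (a(E ∩ V) + (3 - t) · b)`.
Hence a 3-edge of `H` padded with `k - 3` new vertices is an edge of `H'`, and padding the
edges of a perfect matching of `H` with disjoint blocks of new vertices gives one of `H'`.
Conversely, `b` exceeds the weight of every set of at most `k` old vertices, so an edge of `H'`
has at most three old vertices; as a perfect matching of `H'` has `m` edges covering `3m` old
vertices, each has exactly three, and these triples form a perfect matching of `H`.
-/

open Finset

theorem Finset.exists_fiber_card_eq {α β : Type*} [DecidableEq α] [Fintype β] (s : Finset α)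
    {c : ℕ} (h : Fintype.card β = c * #s) :
    ∃ p : β → α, (∀ u, p u ∈ s) ∧ ∀ x ∈ s, #{u | p u = x} = c := by
  obtain ⟨e⟩ : Nonempty (β ≃ Fin c × s) := Fintype.card_eq.1 (by simpa using h)
  refine ⟨fun u => (e u).2, fun u => (e u).2.2, fun x hx => ?_⟩
  calc #{u | ((e u).2 : α) = x} = #{y : Fin c × s | y.2 = ⟨x, hx⟩} :=
        card_equiv e (by simp [Subtype.ext_iff])
    _ = #(univ ×ˢ {⟨x, hx⟩} : Finset (Fin c × s)) := by
        congr 1; ext ⟨j, y⟩; simp [eq_comm]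
    _ = c := by simp

namespace IsPerfectMatching

variable {α β : Type*} [DecidableEq α] [DecidableEq β]

section

variable {M : Finset (Finset α)} {W : Finset α}

theorem sum_card (h : IsPerfectMatching M W) : ∑ E ∈ M, #E = #W := by
  rw [← h.2, card_biUnion h.1]
  rfl

theorem card_mul_eq {k : ℕ} (h : IsPerfectMatching M W) (hk : ∀ E ∈ M, #E = k) :
    #M * k = #W := by
  rw [← h.sum_card, sum_const_nat hk]

theorem disjSum_fibers [Fintype β] (h : IsPerfectMatching M W) (p : β → Finset α)
    (hp : ∀ u, p u ∈ M) :
    IsPerfectMatching (M.image fun E => E.disjSum {u | p u = E}) (W.disjSum univ) := by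
  refine ⟨?_, ?_⟩
  · simp only [coe_image]
    rintro _ ⟨E, hE, rfl⟩ _ ⟨F, hF, rfl⟩ hEF
    have hne : E ≠ F := by rintro rfl; exact hEF rfl
    have hdisj : Disjoint E F := h.1 hE hF hne
    simp only [Function.onFun, id, disjoint_left, Sum.forall, inl_mem_disjSum,
      inr_mem_disjSum, mem_filter, mem_univ, true_and]
    exact ⟨fun v hvE hvF => disjoint_left.1 hdisj hvE hvF, fun u hu hu' => hne (hu ▸ hu')⟩
  · ext (v | u)
    · simp [← h.2]
    · simp only [mem_biUnion, mem_image, id, inr_mem_disjSum, mem_univ, iff_true]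
      exact ⟨_, ⟨p u, hp u, rfl⟩, by simp⟩

theorem exists_disjSum_univ [Fintype β] {c : ℕ} (h : IsPerfectMatching M W)
    (hc : Fintype.card β = c * #M) :
    ∃ M' : Finset (Finset (α ⊕ β)), IsPerfectMatching M' (W.disjSum univ) ∧
      ∀ E' ∈ M', E'.toLeft ∈ M ∧ #E'.toRight = c := by
  obtain ⟨p, hpM, hp⟩ := M.exists_fiber_card_eq hc
  refine ⟨_, h.disjSum_fibers p hpM, ?_⟩
  simp only [mem_image, forall_exists_index, and_imp]
  rintro _ E hE rfl
  simpa using ⟨hE, hp E hE⟩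

end

variable {M : Finset (Finset (α ⊕ β))} {W : Finset (α ⊕ β)}

theorem pairwiseDisjoint_toLeft (h : IsPerfectMatching M W) :
    (M : Set (Finset (α ⊕ β))).PairwiseDisjoint toLeft := fun E hE F hF hEF => by
  have hdisj : Disjoint E F := h.1 hE hF hEF
  simp only [Function.onFun, disjoint_left, mem_toLeft] at hdisj ⊢
  exact fun v => @hdisj (.inl v)

theorem biUnion_toLeft (h : IsPerfectMatching M W) : M.biUnion toLeft = W.toLeft := by
  ext v
  simp [← h.2]

theorem sum_card_toLeft (h : IsPerfectMatching M W) : ∑ E ∈ M, #E.toLeft = #W.toLeft := by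
  rw [← h.biUnion_toLeft, card_biUnion h.pairwiseDisjoint_toLeft]

theorem card_toLeft_eq_of_le {c : ℕ} (h : IsPerfectMatching M W)
    (hle : ∀ E ∈ M, #E.toLeft ≤ c) (hW : #W.toLeft = #M * c) :
    ∀ E ∈ M, #E.toLeft = c := by
  refine (sum_eq_sum_iff_of_le hle).1 ?_
  rw [h.sum_card_toLeft, hW, sum_const, smul_eq_mul]

theorem image_toLeft (h : IsPerfectMatching M W) :
    IsPerfectMatching (M.image toLeft) W.toLeft := by
  refine ⟨?_, by rw [← h.biUnion_toLeft, image_biUnion]; rfl⟩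
  simp only [coe_image]
  rintro _ ⟨E, hE, rfl⟩ _ ⟨F, hF, rfl⟩ hEF
  exact h.pairwiseDisjoint_toLeft hE hF (by rintro rfl; exact hEF rfl)

end IsPerfectMatching

section LiftWeight

variable {α β : Type*} {k : ℕ} {a : α → ℤ} {b : ℤ}

/-- The labeling `a'` of the reduction on `V ⊎ U`. -/
def liftWeight (k : ℕ) (a : α → ℤ) (b : ℤ) : α ⊕ β → ℤ :=
  Sum.elim (fun v => k * a v - (k - 3) * b) fun _ => 3 * b

theorem sum_liftWeight {E : Finset (α ⊕ β)} (hE : #E = k) :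
    ∑ x ∈ E, liftWeight k a b x = k * (∑ v ∈ E.toLeft, a v + (3 - #E.toLeft) * b) := by
  have hR : (#E.toRight : ℤ) = k - #E.toLeft := by
    rw [← hE, ← card_toLeft_add_card_toRight]; push_cast; ring
  rw [← toLeft_disjSum_toRight (u := E), sum_disjSum, toLeft_disjSum]
  simp only [liftWeight, Sum.elim_inl, Sum.elim_inr, sum_sub_distrib, ← mul_sum, sum_const,
    nsmul_eq_mul, hR]
  ring

theorem sum_liftWeight_nonneg_iff {E : Finset (α ⊕ β)} (hk : 0 < k) (hE : #E = k)
    (hL : #E.toLeft = 3) :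
    0 ≤ ∑ x ∈ E, liftWeight k a b x ↔ 0 ≤ ∑ v ∈ E.toLeft, a v := by
  rw [sum_liftWeight hE, hL]
  push_cast
  rw [zero_mul, add_zero]
  exact mul_nonneg_iff_of_pos_left (by exact_mod_cast hk)

theorem card_toLeft_le_three (hb : ∀ S : Finset α, #S ≤ k → ∑ v ∈ S, a v < b)
    {E : Finset (α ⊕ β)} (hE : #E = k) (hpos : 0 ≤ ∑ x ∈ E, liftWeight k a b x) :
    #E.toLeft ≤ 3 := by
  by_contra! h4
  have hb0 : 0 < b := by simpa using hb ∅ (by simp)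
  have hL : ∑ v ∈ E.toLeft, a v < b := hb _ (hE ▸ card_toLeft_le)
  have h4' : (4 : ℤ) ≤ #E.toLeft := by exact_mod_cast h4
  rw [sum_liftWeight hE] at hpos
  have hneg : ∑ v ∈ E.toLeft, a v + (3 - #E.toLeft) * b < 0 := by nlinarith
  have hk : (0 : ℤ) < k := by have := card_toLeft_le (u := E); omega
  exact (mul_neg_of_pos_of_neg hk hneg).not_ge hpos

end LiftWeight

theorem reduction_perfect_matching_iff_general {V : Type*} [Fintype V] [DecidableEq V]
    (k m : ℕ) (hk : 4 ≤ k) (hcard : Fintype.card V = 3 * m) (a : V → ℤ)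
    (H : Finset (Finset V))
    (hH : ∀ E : Finset V, E ∈ H ↔ (E.card = 3 ∧ 0 ≤ ∑ v ∈ E, a v))
    (b : ℤ)
    (hb : IsGreatest {s : ℤ | ∃ E : Finset V, E.card ≤ k ∧ s = ∑ v ∈ E, a v} (b - 1))
    (a' : V ⊕ Fin ((k - 3) * m) → ℤ)
    (ha'V : ∀ v : V, a' (Sum.inl v) = (k : ℤ) * a v - ((k : ℤ) - 3) * b)
    (ha'U : ∀ u : Fin ((k - 3) * m), a' (Sum.inr u) = 3 * b)
    (H' : Finset (Finset (V ⊕ Fin ((k - 3) * m))))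
    (hH' : ∀ E' : Finset (V ⊕ Fin ((k - 3) * m)),
      E' ∈ H' ↔ (E'.card = k ∧ 0 ≤ ∑ x ∈ E', a' x)) :
    (∃ M : Finset (Finset V), M ⊆ H ∧ IsPerfectMatching M Finset.univ) ↔
    (∃ M' : Finset (Finset (V ⊕ Fin ((k - 3) * m))),
      M' ⊆ H' ∧ IsPerfectMatching M' Finset.univ) := by
  obtain rfl : a' = liftWeight k a b := funext (Sum.rec ha'V ha'U)
  have hsum_lt (S : Finset V) (hS : #S ≤ k) : ∑ v ∈ S, a v < b := by
    linarith [hb.2 ⟨S, hS, rfl⟩]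
  constructor
  · rintro ⟨M, hMH, hM⟩
    have hM3 (E) (hE : E ∈ M) : #E = 3 := ((hH E).1 (hMH hE)).1
    have hMm : #M = m := by have := hM.card_mul_eq hM3; rw [card_univ, hcard] at this; omega
    obtain ⟨M', hM', hM'M⟩ := hM.exists_disjSum_univ (β := Fin ((k - 3) * m)) (c := k - 3)
      (by rw [Fintype.card_fin, hMm])
    refine ⟨M', fun E' hE' => ?_, by simpa using hM'⟩
    obtain ⟨hEM, hR⟩ := hM'M E' hE'
    have hcard' : #E' = k := by
      rw [← card_toLeft_add_card_toRight, hM3 _ hEM, hR]; omega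
    rw [hH', sum_liftWeight_nonneg_iff (by omega) hcard' (hM3 _ hEM)]
    exact ⟨hcard', ((hH _).1 (hMH hEM)).2⟩
  · rintro ⟨M', hM'H', hM'⟩
    have hM'k (E) (hE : E ∈ M') : #E = k := ((hH' E).1 (hM'H' hE)).1
    have hM'm : #M' = m := by
      have := hM'.card_mul_eq hM'k
      rw [card_univ, Fintype.card_sum, hcard, Fintype.card_fin, ← add_mul,
        Nat.add_sub_cancel' (by omega), mul_comm] at this
      exact Nat.eq_of_mul_eq_mul_left (by omega) this
    have hL3 := hM'.card_toLeft_eq_of_le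
      (fun E hE => card_toLeft_le_three hsum_lt (hM'k E hE) ((hH' E).1 (hM'H' hE)).2)
      (by rw [toLeft_univ, card_univ, hcard, hM'm, mul_comm])
    refine ⟨M'.image toLeft, image_subset_iff.2 fun E hE => ?_, by simpa using hM'.image_toLeft⟩
    have hpos := ((hH' E).1 (hM'H' hE)).2
    rw [sum_liftWeight_nonneg_iff (by omega) (hM'k E hE) (hL3 E hE)] at hpos
    exact (hH _).2 ⟨hL3 E hE, hpos⟩

/-- In the reduction from separable 3-hypergraphs to separable
`k`-hypergraphs (`k ≥ 4`): with `|V| = 3m`, `H = {E : |E| = 3, a(E) ≥ 0} ≠ ∅`,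
`b = 1 + max{a(E) : |E| ≤ k}`, `U` a set of `(k-3)m` new vertices, `a'(u) = 3b` on
`U`, `a'(v) = k·a(v) - (k-3)·b` on `V`, and
`H' = {E' ⊆ V ⊎ U : |E'| = k, a'(E') ≥ 0}`, the hypergraph `H` has a perfect
matching iff `H'` has one. -/
theorem reduction_perfect_matching_iff {V : Type*} [Fintype V] [DecidableEq V]
    (k m : ℕ) (hk : 4 ≤ k) (hcard : Fintype.card V = 3 * m) (a : V → ℤ)
    (H : Finset (Finset V))
    (hH : ∀ E : Finset V, E ∈ H ↔ (E.card = 3 ∧ 0 ≤ ∑ v ∈ E, a v))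
    (hne : H.Nonempty)
    (b : ℤ)
    (hb : IsGreatest {s : ℤ | ∃ E : Finset V, E.card ≤ k ∧ s = ∑ v ∈ E, a v} (b - 1))
    (a' : V ⊕ Fin ((k - 3) * m) → ℤ)
    (ha'V : ∀ v : V, a' (Sum.inl v) = (k : ℤ) * a v - ((k : ℤ) - 3) * b)
    (ha'U : ∀ u : Fin ((k - 3) * m), a' (Sum.inr u) = 3 * b)
    (H' : Finset (Finset (V ⊕ Fin ((k - 3) * m))))
    (hH' : ∀ E' : Finset (V ⊕ Fin ((k - 3) * m)),
      E' ∈ H' ↔ (E'.card = k ∧ 0 ≤ ∑ x ∈ E', a' x)) :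
    (∃ M : Finset (Finset V), M ⊆ H ∧ IsPerfectMatching M Finset.univ) ↔
    (∃ M' : Finset (Finset (V ⊕ Fin ((k - 3) * m))),
      M' ⊆ H' ∧ IsPerfectMatching M' Finset.univ) :=
  reduction_perfect_matching_iff_general k m hk hcard a H hH b hb a' ha'V ha'U H' hH'
end
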